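/- arXiv:1212.0770 — 2 statements merged into one kernel-verified Lean document; each statement's English description precedes it below -/
import Mathlib

section
/- For the metric q_{μν} = (1/α) η_{μν} − (β/(α(α+β)w)) ∂_μΦ ∂_νΦ in 4 dimensions with α > 0, α + β > 0, w ≠ 0, the determinants satisfy √(−det q) = √(−det η) / (α √(α(α+β))). -/
/-! `q = α⁻¹ (η - c Φ Φᵀ)` with `c = β / ((α + β) w)` is a rank-one perturbation of `η / α`, so by
the matrix determinant lemma `det q = α⁻⁴ det η (1 - c Φ ⬝ η⁻¹ Φ) = α⁻⁴ det η (1 - β / (α + β))`,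
and the last factor is `α / (α + β)`. -/

namespace Matrix

variable {n R : Type*} [Fintype n] [DecidableEq n] [CommRing R]

theorem det_one_sub_vecMulVec (u v : n → R) : (1 - vecMulVec u v).det = 1 - v ⬝ᵥ u := by
  rw [sub_eq_add_neg, ← neg_vecMulVec, vecMulVec_eq (Fin 1),
    det_one_add_replicateCol_mul_replicateRow, dotProduct_neg, ← sub_eq_add_neg]

theorem det_sub_vecMulVec_of_mul_eq_one {A B : Matrix n n R} (h : A * B = 1) (u v : n → R) :
    (A - vecMulVec u v).det = A.det * (1 - v ⬝ᵥ B *ᵥ u) := by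
  rw [← det_one_sub_vecMulVec, ← det_mul, Matrix.mul_sub, Matrix.mul_one, mul_vecMulVec,
    mulVec_mulVec, h, one_mulVec]

end Matrix

theorem Real.sqrt_neg_div_pow_three_mul {d α γ : ℝ} (hα : 0 ≤ α) (hγ : 0 ≤ γ) :
    √(-(d / (α ^ 3 * γ))) = √(-d) / (α * √(α * γ)) := by
  rw [← neg_div, Real.sqrt_div' _ (by positivity), show α ^ 3 * γ = α ^ 2 * (α * γ) by ring,
    Real.sqrt_mul (sq_nonneg α), Real.sqrt_sq hα]

open Matrix

theorem stmt2_general (ηcov ηcon : Matrix (Fin 4) (Fin 4) ℝ)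
    (hinv : ηcov * ηcon = 1)
    (dΦ : Fin 4 → ℝ) (α β : ℝ) (hα : 0 < α) (hαβ : 0 < α + β)
    (w : ℝ) (hw : w = dΦ ⬝ᵥ ηcon.mulVec dΦ) (hw0 : w ≠ 0)
    (qcov : Matrix (Fin 4) (Fin 4) ℝ)
    (hq : qcov = (1 / α) • ηcov - (β / (α * (α + β) * w)) • vecMulVec dΦ dΦ) :
    Real.sqrt (-qcov.det) = Real.sqrt (-ηcov.det) / (α * Real.sqrt (α * (α + β))) ∧
    qcov.det = ηcov.det / (α ^ 3 * (α + β)) := by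
  have hq_rank_one : qcov = (1 / α) • (ηcov - vecMulVec ((β / ((α + β) * w)) • dΦ) dΦ) := by
    rw [hq, smul_sub, smul_vecMulVec, smul_smul]
    congr 3
    field_simp
  have hdet : qcov.det = ηcov.det / (α ^ 3 * (α + β)) := by
    rw [hq_rank_one, det_smul, det_sub_vecMulVec_of_mul_eq_one hinv, mulVec_smul, dotProduct_smul,
      ← hw, Fintype.card_fin, smul_eq_mul]
    field_simp
    ring
  exact ⟨by rw [hdet, Real.sqrt_neg_div_pow_three_mul hα.le hαβ.le], hdet⟩

/-- For the covariant metric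
`q_{μν} = (1/α) η_{μν} − (β/(α(α+β)w)) ∂_μΦ ∂_νΦ` in 4 dimensions, with
`η_{μν}` Lorentzian (`det η < 0`), `α > 0`, `α+β > 0`, `w ≠ 0`, the determinants
satisfy `√(−det q) = √(−det η) / (α √(α(α+β)))`
(equivalently `det q = det η / (α³(α+β))`). -/
theorem stmt2 (ηcov ηcon : Matrix (Fin 4) (Fin 4) ℝ)
    (hsymm : ηcov.IsSymm) (hinv : ηcov * ηcon = 1) (hinv' : ηcon * ηcov = 1)
    (hdet : ηcov.det < 0)
    (dΦ : Fin 4 → ℝ) (α β : ℝ) (hα : 0 < α) (hαβ : 0 < α + β)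
    (w : ℝ) (hw : w = dΦ ⬝ᵥ ηcon.mulVec dΦ) (hw0 : w ≠ 0)
    (qcov : Matrix (Fin 4) (Fin 4) ℝ)
    (hq : qcov = (1 / α) • ηcov - (β / (α * (α + β) * w)) • vecMulVec dΦ dΦ) :
    Real.sqrt (-qcov.det) = Real.sqrt (-ηcov.det) / (α * Real.sqrt (α * (α + β))) ∧
    qcov.det = ηcov.det / (α ^ 3 * (α + β)) :=
  stmt2_general ηcov ηcon hinv dΦ α β hα hαβ w hw hw0 qcov hq
end

section
/- Equivalence condition (fundamental Lemma, pointwise algebraic form): with α + β = α³ V and √(−q) = √(−η)/(α√(α(α+β))), one has √(−q) q^{μν} ∂_νΦ = √(−η) √V · η^{μν} ∂_νΦ, so that (1/√(−q)) ∂_μ(√(−q) q^{μν} ∂_νΦ) = 0 is equivalent to ∂_μ(√(−η) √V η^{μν} ∂_νΦ) = 0. -/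
open Matrix

/-- Partial derivative in direction μ of a function on ℝ⁴. -/
noncomputable def pd4 (μ : Fin 4) (f : (Fin 4 → ℝ) → ℝ) (x : Fin 4 → ℝ) : ℝ :=
  fderiv ℝ f x (Pi.single μ 1)

/-- pointwise algebraic form of the fundamental equivalence Lemma.
With `q^{μν} = α η^{μν} + (β/w)∂^μΦ∂^νΦ`, `α + β = α³ V(Φ)` and
`√(−q) = √(−η)/(α√(α(α+β)))`, one has
`√(−q) q^{μν}∂_νΦ = √(−η) √V η^{μν}∂_νΦ`, so the curved-space wave equation
`∂_μ(√(−q) q^{μν}∂_νΦ) = 0` is equivalent to `∂_μ(√(−η) √V η^{μν}∂_νΦ) = 0`. -/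
theorem stmt4 (ηcon : (Fin 4 → ℝ) → Matrix (Fin 4) (Fin 4) ℝ)
    (hηsymm : ∀ x, (ηcon x).IsSymm)
    (Φ : (Fin 4 → ℝ) → ℝ) (hΦ : ContDiff ℝ (⊤ : ℕ∞) Φ)
    (α β : (Fin 4 → ℝ) → ℝ) (hα : ∀ x, 0 < α x) (hβ : ∀ x, 0 < β x)
    (V : ℝ → ℝ) (hV : ∀ s, 0 < V s)
    (w : (Fin 4 → ℝ) → ℝ)
    (hw : ∀ x, w x = ∑ μ, ∑ ν, ηcon x μ ν * pd4 μ Φ x * pd4 ν Φ x)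
    (hw0 : ∀ x, w x ≠ 0)
    (hVαβ : ∀ x, α x + β x = (α x) ^ 3 * V (Φ x))
    (qcon : (Fin 4 → ℝ) → Matrix (Fin 4) (Fin 4) ℝ)
    (hq : ∀ x, qcon x = α x • ηcon x +
      (β x / w x) • vecMulVec ((ηcon x).mulVec (fun μ => pd4 μ Φ x))
        ((ηcon x).mulVec (fun μ => pd4 μ Φ x)))
    (sη sq : (Fin 4 → ℝ) → ℝ) (hsη : ∀ x, 0 < sη x)
    (hsq : ∀ x, sq x = sη x / (α x * Real.sqrt (α x * (α x + β x)))) :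
    (∀ x, ∀ μ, sq x * (qcon x).mulVec (fun ν => pd4 ν Φ x) μ =
        sη x * Real.sqrt (V (Φ x)) * (ηcon x).mulVec (fun ν => pd4 ν Φ x) μ) ∧
    ((∀ x, ∑ μ, pd4 μ (fun y => sq y * (qcon y).mulVec (fun ν => pd4 ν Φ y) μ) x = 0) ↔
      (∀ x, ∑ μ, pd4 μ
        (fun y => sη y * Real.sqrt (V (Φ y)) * (ηcon y).mulVec (fun ν => pd4 ν Φ y) μ) x = 0)) := by

  have key : ∀ x, ∀ μ, sq x * (qcon x).mulVec (fun ν => pd4 ν Φ x) μ =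
      sη x * Real.sqrt (V (Φ x)) * (ηcon x).mulVec (fun ν => pd4 ν Φ x) μ := by
    intro x μ
    set d : Fin 4 → ℝ := fun ν => pd4 ν Φ x with hd
    set u : Fin 4 → ℝ := (ηcon x).mulVec d with hu
    have hud : (∑ ν, u ν * d ν) = w x := by
      rw [hw x]
      refine Finset.sum_congr rfl fun ν _ => ?_
      simp only [hu, mulVec, dotProduct]
      rw [Finset.sum_mul]
      exact Finset.sum_congr rfl fun σ _ => by ring
    have humu : (∑ ν, ηcon x μ ν * d ν) = u μ := by
      simp [hu, mulVec, dotProduct]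
    have hqd : (qcon x).mulVec d μ = (α x + β x) * u μ := by
      have hvv : (vecMulVec u u).mulVec d μ = u μ * ∑ ν, u ν * d ν := by
        simp only [mulVec, dotProduct, vecMulVec_apply, Finset.mul_sum, mul_assoc]
      rw [hq x, add_mulVec, smul_mulVec, smul_mulVec]
      simp only [Pi.add_apply, Pi.smul_apply, smul_eq_mul]
      rw [hvv, hud, ← hu]
      field_simp [hw0 x]
    have hVpos := hV (Φ x)
    have hαx := hα x
    have h1 : Real.sqrt (α x * (α x + β x)) = α x ^ 2 * Real.sqrt (V (Φ x)) := by
      rw [hVαβ x, show α x * (α x ^ 3 * V (Φ x)) = (α x ^ 2) ^ 2 * V (Φ x) by ring,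
        Real.sqrt_mul (by positivity), Real.sqrt_sq (by positivity)]
    have hVsq : Real.sqrt (V (Φ x)) * Real.sqrt (V (Φ x)) = V (Φ x) :=
      Real.mul_self_sqrt hVpos.le
    have hsV : Real.sqrt (V (Φ x)) > 0 := Real.sqrt_pos.2 hVpos
    have h2 : Real.sqrt (V (Φ x)) ^ 2 = V (Φ x) := Real.sq_sqrt hVpos.le
    rw [hqd, hsq x, h1, hVαβ x]
    field_simp
    linear_combination (-(sη x * u μ)) * h2
  refine ⟨key, ?_⟩
  have hfun : ∀ μ : Fin 4, (fun y => sq y * (qcon y).mulVec (fun ν => pd4 ν Φ y) μ)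
      = (fun y => sη y * Real.sqrt (V (Φ y)) * (ηcon y).mulVec (fun ν => pd4 ν Φ y) μ) :=
    fun μ => funext fun y => key y μ
  have hsum : ∀ x, (∑ μ, pd4 μ (fun y => sq y * (qcon y).mulVec (fun ν => pd4 ν Φ y) μ) x)
      = ∑ μ, pd4 μ (fun y => sη y * Real.sqrt (V (Φ y)) *
          (ηcon y).mulVec (fun ν => pd4 ν Φ y) μ) x := by
    intro x
    exact Finset.sum_congr rfl fun μ _ => by rw [hfun μ]
  exact ⟨fun h x => by rw [← hsum x]; exact h x, fun h x => by rw [hsum x]; exact h x⟩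
end
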